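/- arXiv:1104.3128 — 2 statements merged into one kernel-verified Lean document; each statement's English description precedes it below -/
import Mathlib

section
/- For the CDUFL instance with two co-located facilities i (uncapacitated, opening cost f > 0) and i′ (capacity u, opening cost 0) and u+1 co-located clients (all distances 0), every integral feasible solution has cost at least f, while the LP relaxation admits a feasible fractional solution of cost f/(u+1). Hence the integrality gap of the natural LP is at least u+1. -/
/-! If the uncapacitated facility is closed, every client must be served wholly by the
capacitated one, which has room for only `u` of the `u + 1` clients; so an integral solution
opens the uncapacitated facility and pays `f`. Fractionally, opening it to the extent
`1/(u+1)` and routing the remaining `u/(u+1)` of each client to the capacitated facility fills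
that facility exactly. -/

section IntegralSolutions

variable {ι : Type*} [Fintype ι]

lemma card_le_sum_capacitated_of_closed {y : ℝ} {x x' : ι → ℝ} (hy : y = 0)
    (hcov : ∀ j, 1 ≤ x j + x' j) (hxy : ∀ j, x j ≤ y) :
    (Fintype.card ι : ℝ) ≤ ∑ j, x' j := by
  have hserved : ∀ j, 1 ≤ x' j := fun j => by linarith [hcov j, hxy j]
  simpa using Finset.sum_le_sum fun j (_ : j ∈ Finset.univ) => hserved j

lemma eq_one_of_integral_of_capacity_lt_card {y c : ℝ} {x x' : ι → ℝ} (hy : y = 0 ∨ y = 1)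
    (hcov : ∀ j, 1 ≤ x j + x' j) (hxy : ∀ j, x j ≤ y) (hcap : ∑ j, x' j ≤ c)
    (hc : c < Fintype.card ι) : y = 1 := by
  rcases hy with hclosed | hopen
  · linarith [card_le_sum_capacitated_of_closed hclosed hcov hxy]
  · exact hopen

end IntegralSolutions

lemma sum_one_sub_inv_succ (u : ℕ) :
    ∑ _j : Fin (u + 1), (1 - ((u : ℝ) + 1)⁻¹) = u := by
  simp only [Finset.sum_const, Finset.card_univ, Fintype.card_fin, nsmul_eq_mul]
  push_cast
  field_simp
  ring

theorem stmt9_general (f : ℝ) (hf : 0 < f) (u : ℕ) :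
    -- every integral feasible solution has cost at least f
    (∀ (y : ℝ) (x x' : Fin (u+1) → ℝ),
      (y = 0 ∨ y = 1) →
      (∀ j, 0 ≤ x j) → (∀ j, 0 ≤ x' j) →
      (∀ j, 1 ≤ x j + x' j) →
      (∀ j, x j ≤ y) →
      (∑ j, x' j ≤ (u : ℝ)) →
      f ≤ f * y)
    ∧
    -- there is a feasible fractional LP solution of cost f/(u+1)
    (∃ (y : ℝ) (x x' : Fin (u+1) → ℝ),
      0 ≤ y ∧ y ≤ 1 ∧
      (∀ j, 0 ≤ x j) ∧ (∀ j, 0 ≤ x' j) ∧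
      (∀ j, 1 ≤ x j + x' j) ∧
      (∀ j, x j ≤ y) ∧
      (∑ j, x' j ≤ (u : ℝ)) ∧
      f * y = f / (u + 1))
    ∧ f / (f / (u + 1)) = (u : ℝ) + 1 := by
  have hinv_le_one : ((u : ℝ) + 1)⁻¹ ≤ 1 := inv_le_one_of_one_le₀ (by simp)
  refine ⟨?_, ?_, div_div_cancel₀ hf.ne'⟩
  · intro y x x' hy _ _ hcov hxy hcap
    have hopen : y = 1 :=
      eq_one_of_integral_of_capacity_lt_card hy hcov hxy hcap (by simp)
    simp [hopen]
  · refine ⟨((u : ℝ) + 1)⁻¹, fun _ => ((u : ℝ) + 1)⁻¹, fun _ => 1 - ((u : ℝ) + 1)⁻¹,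
      by positivity, hinv_le_one, fun _ => by positivity, fun _ => sub_nonneg.mpr hinv_le_one,
      fun _ => by simp, fun _ => le_rfl, (sum_one_sub_inv_succ u).le, div_eq_mul_inv f _ |>.symm⟩

/-- CDUFL integrality-gap instance: one uncapacitated facility with opening cost `f > 0`,
one capacitated facility with capacity `u ≥ 1` and zero opening cost, `u+1` co-located
clients (all distances 0). Every integral feasible solution has cost at least `f`, while
the natural LP admits a feasible fractional solution of cost `f/(u+1)`; hence the
integrality gap is at least `u+1`. -/
theorem stmt9 (f : ℝ) (hf : 0 < f) (u : ℕ) (hu : 1 ≤ u) :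
    -- every integral feasible solution has cost at least f
    (∀ (y : ℝ) (x x' : Fin (u+1) → ℝ),
      (y = 0 ∨ y = 1) →
      (∀ j, 0 ≤ x j) → (∀ j, 0 ≤ x' j) →
      (∀ j, 1 ≤ x j + x' j) →
      (∀ j, x j ≤ y) →
      (∑ j, x' j ≤ (u : ℝ)) →
      f ≤ f * y)
    ∧
    -- there is a feasible fractional LP solution of cost f/(u+1)
    (∃ (y : ℝ) (x x' : Fin (u+1) → ℝ),
      0 ≤ y ∧ y ≤ 1 ∧
      (∀ j, 0 ≤ x j) ∧ (∀ j, 0 ≤ x' j) ∧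
      (∀ j, 1 ≤ x j + x' j) ∧
      (∀ j, x j ≤ y) ∧
      (∑ j, x' j ≤ (u : ℝ)) ∧
      f * y = f / (u + 1))
    ∧ f / (f / (u + 1)) = (u : ℝ) + 1 :=
  stmt9_general f hf u
end

section
/- Suppose a local-search algorithm for a minimization problem guarantees, for any feasible solution SOL with facility cost F^SOL and assignment cost C^SOL, a solution with facility cost F̂ ≤ F^SOL + 2·C^SOL and assignment cost Ĉ ≤ F^SOL + C^SOL. If facility costs are scaled by σ = √2 before running the algorithm, the returned solution (evaluated with original costs) has total cost at most (1 + √2)·(F^OPT + C^OPT), where OPT is an optimal solution. -/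
/-- Scaling facility costs by `σ = √2` before running the local-search algorithm
(whose guarantee is `F̂ ≤ F^SOL + 2C^SOL`, `Ĉ ≤ F^SOL + C^SOL`) yields a
`(1+√2)`-approximation: if `σF ≤ σF^OPT + 2C^OPT` and `C ≤ σF^OPT + C^OPT`, then
`F + C ≤ (1+√2)(F^OPT + C^OPT)`. -/
theorem stmt10 (Fopt Copt F C σ : ℝ) (hFopt : 0 ≤ Fopt) (hCopt : 0 ≤ Copt)
    (hσ : σ = Real.sqrt 2)
    (hF : σ * F ≤ σ * Fopt + 2 * Copt)
    (hC : C ≤ σ * Fopt + Copt) :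
    F + C ≤ (1 + Real.sqrt 2) * (Fopt + Copt) := by
  have h2 : (Real.sqrt 2) ^ 2 = 2 := Real.sq_sqrt (by norm_num)
  have hpos : (1:ℝ) ≤ Real.sqrt 2 := by
    nlinarith [Real.sqrt_nonneg 2]
  subst hσ
  nlinarith [Real.sqrt_nonneg 2]
end
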